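/- arXiv:2602.16059 — 10 statements merged into one kernel-verified Lean document; each statement's English description precedes it below -/
import Mathlib

section
/- For any finite set X of species, any function ε : X → ℝ, any x ∈ X, and ANY function φ : 2^X → ℝ, the generalized HEDGE score factorizes as ψ'_x = ψ_x · ε_x, where ψ_x is the g-FOB-weighted expectation of Δ_φ(S_x, x) = φ(S_x ∪ {x}) − φ(S_x) and ψ'_x is the g-FOB-weighted expectation of Δ'_φ(S_x, x) = φ(S_x ∪ {x}) − φ(S_x ∪ I_x). -/
open Finset

/-- g-FOB weight of the survivor set `S ⊆ X \ {x}`: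
each species `y ≠ x` independently survives with probability `1 - ε y`. -/
noncomputable def gfobWeight {X : Type*} [Fintype X] [DecidableEq X]
    (ε : X → ℝ) (x : X) (S : Finset X) : ℝ :=
  (∏ y ∈ S, (1 - ε y)) * ∏ y ∈ Finset.univ.erase x \ S, ε y

/-- generalized HED score `ψ_x`: the g-FOB expectation of
`Δ_φ(S, x) = φ(S ∪ {x}) - φ(S)`. -/
noncomputable def psi {X : Type*} [Fintype X] [DecidableEq X]
    (ε : X → ℝ) (φ : Finset X → ℝ) (x : X) : ℝ :=
  ∑ S ∈ (Finset.univ.erase x).powerset,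
    gfobWeight ε x S * (φ (S ∪ {x}) - φ S)

/-- generalized HEDGE score `ψ'_x`: the expectation of
`Δ'_φ(S, x) = φ(S ∪ {x}) - φ(S ∪ I_x)`, averaging also over the fate `I_x` of `x`
(`I_x = {x}` with probability `1 - ε x`, `I_x = ∅` with probability `ε x`). -/
noncomputable def psi' {X : Type*} [Fintype X] [DecidableEq X]
    (ε : X → ℝ) (φ : Finset X → ℝ) (x : X) : ℝ :=
  ∑ S ∈ (Finset.univ.erase x).powerset,
    gfobWeight ε x S *
      ((1 - ε x) * (φ (S ∪ {x}) - φ (S ∪ {x})) +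
        ε x * (φ (S ∪ {x}) - φ (S ∪ ∅)))

/-- Proposition 1(i): for ANY `φ : 2^X → ℝ`, under the g-FOB model the generalized
HEDGE score factorizes as `ψ'_x = ψ_x · ε_x`. -/
theorem hedge_eq_hed_mul_extinction {X : Type*} [Fintype X] [DecidableEq X]
    (ε : X → ℝ) (x : X) (φ : Finset X → ℝ) :
    psi' ε φ x = psi ε φ x * ε x := by
  rw [psi', psi, sum_mul]
  refine sum_congr rfl fun S _ => ?_
  -- if `x` survives, the two terms of `Δ'_φ` cancel; only the extinction branch remains
  rw [union_empty]
  ring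
end

section
/- For any finite set X of species, any function ε : X → ℝ, any x ∈ X, and ANY function φ : 2^X → ℝ, the variance of the generalized HEDGE random variable satisfies Φ'_x = Φ_x · ε_x + ψ_x² · ε_x · (1 − ε_x), where Φ_x is the g-FOB variance of Δ_φ(S_x, x), ψ_x its mean, and Φ'_x is the variance of Δ'_φ(S_x, x) under the joint distribution of S_x and I_x. -/
open Finset

/-- `Φ_x`: the g-FOB variance of `Δ_φ(S, x) = φ(S ∪ {x}) - φ(S)`. -/
noncomputable def PhiVar {X : Type*} [Fintype X] [DecidableEq X]
    (ε : X → ℝ) (φ : Finset X → ℝ) (x : X) : ℝ :=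
  (∑ S ∈ (Finset.univ.erase x).powerset,
    gfobWeight ε x S * (φ (S ∪ {x}) - φ S) ^ 2) - psi ε φ x ^ 2

/-- `Φ'_x`: the variance of `Δ'_φ(S, x) = φ(S ∪ {x}) - φ(S ∪ I_x)` under the joint
distribution of `S_x` and `I_x`. -/
noncomputable def PhiVar' {X : Type*} [Fintype X] [DecidableEq X]
    (ε : X → ℝ) (φ : Finset X → ℝ) (x : X) : ℝ :=
  (∑ S ∈ (Finset.univ.erase x).powerset,
    gfobWeight ε x S *
      ((1 - ε x) * (φ (S ∪ {x}) - φ (S ∪ {x})) ^ 2 +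
        ε x * (φ (S ∪ {x}) - φ (S ∪ ∅)) ^ 2)) - psi' ε φ x ^ 2

/-! `Δ'_φ(S, x, I_x)` vanishes when `x` survives and equals `Δ_φ(S, x)` when it goes extinct, so it is
`B · Δ_φ(S, x)` for a Bernoulli(`ε x`) variable `B` independent of `S`; such a product has mean
`ε x · ψ_x` and variance `ε x · Φ_x + ε x (1 - ε x) ψ_x²`. -/

theorem variance_bernoulli_mul {ι : Type*} (s : Finset ι) (w d : ι → ℝ) (p : ℝ) :
    (∑ i ∈ s, w i * (p * d i ^ 2)) - (∑ i ∈ s, w i * (p * d i)) ^ 2 =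
      ((∑ i ∈ s, w i * d i ^ 2) - (∑ i ∈ s, w i * d i) ^ 2) * p +
        (∑ i ∈ s, w i * d i) ^ 2 * p * (1 - p) := by
  simp only [mul_left_comm _ p, ← mul_sum]
  ring

theorem PhiVar'_eq {X : Type*} [Fintype X] [DecidableEq X]
    (ε : X → ℝ) (φ : Finset X → ℝ) (x : X) :
    PhiVar' ε φ x =
      (∑ S ∈ (univ.erase x).powerset, gfobWeight ε x S * (ε x * (φ (S ∪ {x}) - φ S) ^ 2)) -
        (∑ S ∈ (univ.erase x).powerset, gfobWeight ε x S * (ε x * (φ (S ∪ {x}) - φ S))) ^ 2 := by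
  simp only [PhiVar', psi', sub_self, union_empty, mul_zero, zero_add, zero_pow two_ne_zero]

/-- Proposition 1(ii): for ANY `φ : 2^X → ℝ`, under the g-FOB model
`Φ'_x = Φ_x · ε_x + ψ_x² · ε_x · (1 − ε_x)`. -/
theorem hedge_variance_formula {X : Type*} [Fintype X] [DecidableEq X]
    (ε : X → ℝ) (x : X) (φ : Finset X → ℝ) :
    PhiVar' ε φ x = PhiVar ε φ x * ε x + psi ε φ x ^ 2 * ε x * (1 - ε x) := by
  rw [PhiVar'_eq, variance_bernoulli_mul]
  rfl
end

section
/- Let X be a finite set of species, 𝔽 a finite set of features, α : X → 2^𝔽, ν : 𝔽 → ℝ≥0, and let φ be the associated feature diversity function. If the surviving set S is distributed according to the g-FOB model with extinction probabilities ε : X → ℝ, then the expected feature diversity satisfies E[φ(S)] = Σ_{f ∈ 𝔽} ν(f) · (1 − ∏_{x ∈ X : f ∈ α(x)} ε_x), where E[φ(S)] = Σ_{S ⊆ X} (∏_{y ∈ S} (1 − ε y)) · (∏_{y ∈ X \ S} ε y) · φ(S). -/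
open Finset

/-- Feature diversity: `φ(S)` is the sum of the weights `ν f` of all features `f`
present in at least one species of `S`. -/
noncomputable def featDiv {X 𝔽 : Type*} [DecidableEq 𝔽]
    (α : X → Finset 𝔽) (ν : 𝔽 → ℝ) (S : Finset X) : ℝ :=
  ∑ f ∈ S.biUnion α, ν f

/-- Expected feature diversity under the g-FOB model:
`E[φ(S)] = Σ_f ν(f) · (1 − Π_{x : f ∈ α(x)} ε_x)`. -/
theorem expected_featDiv {X 𝔽 : Type*} [Fintype X] [DecidableEq X]
    [Fintype 𝔽] [DecidableEq 𝔽]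
    (α : X → Finset 𝔽) (ν : 𝔽 → ℝ) (hν : ∀ f, 0 ≤ ν f) (ε : X → ℝ) :
    ∑ S ∈ (Finset.univ : Finset X).powerset,
        ((∏ y ∈ S, (1 - ε y)) * ∏ y ∈ Finset.univ \ S, ε y) * featDiv α ν S
      = ∑ f : 𝔽, ν f * (1 - ∏ x ∈ Finset.univ.filter (fun x => f ∈ α x), ε x) := by
  have key : ∀ f : 𝔽,
      ∑ S ∈ (Finset.univ : Finset X).powerset,
        ((∏ y ∈ S, (1 - ε y)) * ∏ y ∈ Finset.univ \ S, ε y) *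
          (if f ∈ S.biUnion α then (1:ℝ) else 0)
      = 1 - ∏ x ∈ Finset.univ.filter (fun x => f ∈ α x), ε x := by
    intro f
    set c : X → ℝ := fun y => if f ∈ α y then 0 else 1 with hc
    have hone : (1:ℝ) = ∑ S ∈ (Finset.univ : Finset X).powerset,
        (∏ y ∈ S, (1 - ε y)) * ∏ y ∈ Finset.univ \ S, ε y := by
      rw [← Finset.prod_add]
      simp
    have hzero : ∏ x ∈ Finset.univ.filter (fun x => f ∈ α x), ε x
        = ∑ S ∈ (Finset.univ : Finset X).powerset,
          (∏ y ∈ S, (1 - ε y) * c y) * ∏ y ∈ Finset.univ \ S, ε y := by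
      have h1 := Finset.prod_add (fun y => (1 - ε y) * c y) ε
        (Finset.univ : Finset X)
      have h2 : ∏ y ∈ (Finset.univ : Finset X), ((1 - ε y) * c y + ε y)
          = ∏ x ∈ Finset.univ.filter (fun x => f ∈ α x), ε x := by
        rw [Finset.prod_filter]
        apply Finset.prod_congr rfl
        intro y _
        by_cases h : f ∈ α y <;> simp [hc, h] <;> ring
      rw [← h2, h1]
    have hchi : ∀ S : Finset X,
        (if f ∈ S.biUnion α then (1:ℝ) else 0) = 1 - ∏ y ∈ S, c y := by
      intro S
      by_cases h : f ∈ S.biUnion α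
      · obtain ⟨x, hx, hfx⟩ := Finset.mem_biUnion.mp h
        have : ∏ y ∈ S, c y = 0 :=
          Finset.prod_eq_zero hx (by simp [hc, hfx])
        simp [h, this]
      · have : ∏ y ∈ S, c y = 1 := by
          apply Finset.prod_eq_one
          intro y hy
          have : f ∉ α y := fun hf => h (Finset.mem_biUnion.mpr ⟨y, hy, hf⟩)
          simp [hc, this]
        simp [h, this]
    calc ∑ S ∈ (Finset.univ : Finset X).powerset,
          ((∏ y ∈ S, (1 - ε y)) * ∏ y ∈ Finset.univ \ S, ε y) *
            (if f ∈ S.biUnion α then (1:ℝ) else 0)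
        = ∑ S ∈ (Finset.univ : Finset X).powerset,
            (((∏ y ∈ S, (1 - ε y)) * ∏ y ∈ Finset.univ \ S, ε y)
              - (∏ y ∈ S, (1 - ε y) * c y) * ∏ y ∈ Finset.univ \ S, ε y) := by
          apply Finset.sum_congr rfl
          intro S _
          rw [hchi S, Finset.prod_mul_distrib]
          ring
      _ = 1 - ∏ x ∈ Finset.univ.filter (fun x => f ∈ α x), ε x := by
          rw [Finset.sum_sub_distrib, ← hone, ← hzero]
  calc ∑ S ∈ (Finset.univ : Finset X).powerset,
        ((∏ y ∈ S, (1 - ε y)) * ∏ y ∈ Finset.univ \ S, ε y) * featDiv α ν S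
      = ∑ S ∈ (Finset.univ : Finset X).powerset, ∑ f : 𝔽,
          ν f * (((∏ y ∈ S, (1 - ε y)) * ∏ y ∈ Finset.univ \ S, ε y) *
            (if f ∈ S.biUnion α then (1:ℝ) else 0)) := by
        have hfd : ∀ S : Finset X, featDiv α ν S
            = ∑ f : 𝔽, ν f * (if f ∈ S.biUnion α then (1:ℝ) else 0) := by
          intro S
          rw [featDiv, eq_comm]
          simp only [mul_ite, mul_one, mul_zero]
          rw [Finset.sum_ite_mem, Finset.univ_inter]
        apply Finset.sum_congr rfl
        intro S _
        rw [hfd S, Finset.mul_sum]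
        apply Finset.sum_congr rfl
        intro f _
        ring
      _ = ∑ f : 𝔽, ν f * (1 - ∏ x ∈ Finset.univ.filter (fun x => f ∈ α x), ε x) := by
        rw [Finset.sum_comm]
        apply Finset.sum_congr rfl
        intro f _
        rw [← Finset.mul_sum, key f]
end

section
/- (Proposition 2, mean) Let X be a finite set of species, 𝔽 a finite set of features, α : X → 2^𝔽, ν : 𝔽 → ℝ≥0, and let φ be the associated feature diversity function. Under the g-FOB model with extinction probabilities ε : X → ℝ, for each species x ∈ X the generalized HED score satisfies ψ_x = Σ_{f ∈ α(x)} ν(f) · ∏_{y ∈ X \ {x} : f ∈ α(y)} ε_y. -/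
/-!
Adding `x` to a survivor set `S` gains exactly the features of `α x` carried by no species
of `S`. Exchanging the sums, `ψ_x` is `Σ_{f ∈ α x} ν f` times the g-FOB probability that no
species `y ≠ x` carrying `f` survives. Since species die independently, this probability is
the product of `ε y` over those carriers: the other species contribute factors
`(1 - ε y) + ε y = 1`.
-/

open Finset

theorem Finset.sum_powerset_filter_not_prod_mul_prod {ι R : Type*} [DecidableEq ι]
    [CommSemiring R] (s : Finset ι) (p : ι → Prop) [DecidablePred p] (f g : ι → R) :
    ∑ t ∈ {i ∈ s | ¬ p i}.powerset, (∏ i ∈ t, f i) * ∏ i ∈ s \ t, g i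
      = (∏ i ∈ s with p i, g i) * ∏ i ∈ s with ¬ p i, (f i + g i) := by
  rw [prod_add, mul_sum]
  refine sum_congr rfl fun t ht => ?_
  have hsplit : s \ t = {i ∈ s | p i} ∪ ({i ∈ s | ¬ p i} \ t) := by
    have hts : t ⊆ {i ∈ s | ¬ p i} := mem_powerset.mp ht
    ext i
    simp only [mem_sdiff, mem_union, mem_filter]
    grind
  rw [hsplit, prod_union (disjoint_filter_filter_not s s p |>.mono_right sdiff_subset)]
  ring

theorem featDiv_union_sub_featDiv {X 𝔽 : Type*} [DecidableEq X] [DecidableEq 𝔽]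
    (α : X → Finset 𝔽) (ν : 𝔽 → ℝ) (S T : Finset X) :
    featDiv α ν (S ∪ T) - featDiv α ν S = ∑ f ∈ T.biUnion α \ S.biUnion α, ν f := by
  rw [featDiv, featDiv, union_biUnion, ← union_sdiff_self_eq_union,
    sum_union disjoint_sdiff, add_sub_cancel_left]

theorem sum_powerset_filter_not_gfobWeight {X : Type*} [Fintype X] [DecidableEq X]
    (ε : X → ℝ) (x : X) (p : X → Prop) [DecidablePred p] :
    ∑ S ∈ {y ∈ univ.erase x | ¬ p y}.powerset, gfobWeight ε x S
      = ∏ y ∈ univ.erase x with p y, ε y := by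
  simp only [gfobWeight, sum_powerset_filter_not_prod_mul_prod, sub_add_cancel, prod_const_one,
    mul_one]

theorem hed_featDiv_general {X 𝔽 : Type*} [Fintype X] [DecidableEq X] [DecidableEq 𝔽]
    (α : X → Finset 𝔽) (ν : 𝔽 → ℝ) (ε : X → ℝ) (x : X) :
    psi ε (featDiv α ν) x
      = ∑ f ∈ α x, ν f * ∏ y ∈ (Finset.univ.erase x).filter (fun y => f ∈ α y), ε y := by
  have hswap : ∀ (S : Finset X) (f : 𝔽),
      S ∈ (univ.erase x).powerset ∧ f ∈ α x \ S.biUnion α ↔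
        S ∈ {y ∈ univ.erase x | f ∉ α y}.powerset ∧ f ∈ α x := by
    intro S f
    simp only [mem_powerset, subset_iff, mem_sdiff, mem_biUnion, mem_filter, not_exists, not_and]
    grind
  simp only [psi, featDiv_union_sub_featDiv, singleton_biUnion, mul_sum]
  rw [sum_comm' hswap]
  refine sum_congr rfl fun f _ => ?_
  simp only [mul_comm (gfobWeight ε x _), ← mul_sum, sum_powerset_filter_not_gfobWeight]

/-- Proposition 2 (mean): under the g-FOB model, the generalized HED score of the
feature diversity function satisfies
`ψ_x = Σ_{f ∈ α(x)} ν(f) · Π_{y ∈ X \ {x} : f ∈ α(y)} ε_y`. -/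
theorem hed_featDiv {X 𝔽 : Type*} [Fintype X] [DecidableEq X] [DecidableEq 𝔽]
    (α : X → Finset 𝔽) (ν : 𝔽 → ℝ) (hν : ∀ f, 0 ≤ ν f) (ε : X → ℝ) (x : X) :
    psi ε (featDiv α ν) x
      = ∑ f ∈ α x, ν f * ∏ y ∈ (Finset.univ.erase x).filter (fun y => f ∈ α y), ε y :=
  hed_featDiv_general α ν ε x
end

section
/- (Proposition 2, variance) Let X be a finite set of species, 𝔽 a finite set of features, α : X → 2^𝔽, ν : 𝔽 → ℝ≥0, and let φ be the associated feature diversity function. Under the g-FOB model with extinction probabilities ε : X → ℝ, for each species x ∈ X the variance of the marginal gain satisfies Φ_x = (Σ_{(f, f') ∈ α(x) × α(x)} ν(f) · ν(f') · ∏_{y ∈ W_{x, f f'}} ε_y) − ψ_x², where W_{x, f f'} = {w ∈ X \ {x} : f ∈ α(w) or f' ∈ α(w)} and ψ_x = Σ_{f ∈ α(x)} ν(f) · ∏_{y ∈ X \ {x} : f ∈ α(y)} ε_y. -/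
open Finset

lemma key_prod {X : Type*} [DecidableEq X] (Y : Finset X) (ε : X → ℝ)
    (p : X → Prop) [DecidablePred p] :
    ∑ S ∈ Y.powerset,
      ((∏ y ∈ S, (1 - ε y)) * ∏ y ∈ Y \ S, ε y) *
        (if ∀ y ∈ S, ¬ p y then (1:ℝ) else 0)
    = ∏ y ∈ Y.filter p, ε y := by
  simp only [mul_ite, mul_one, mul_zero]
  rw [← Finset.sum_filter]
  have hset : Y.powerset.filter (fun S => ∀ y ∈ S, ¬ p y)
      = (Y.filter fun y => ¬ p y).powerset := by
    ext S
    simp only [mem_filter, mem_powerset, Finset.subset_iff, mem_filter]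
    constructor
    · rintro ⟨h1, h2⟩
      exact fun y hy => ⟨h1 hy, h2 y hy⟩
    · intro h
      exact ⟨fun y hy => (h hy).1, fun y hy => (h hy).2⟩
  rw [hset]
  have h2 : ∀ S ∈ (Y.filter fun y => ¬ p y).powerset,
      (∏ y ∈ S, (1 - ε y)) * ∏ y ∈ Y \ S, ε y
      = (∏ y ∈ Y.filter p, ε y) *
        ((∏ y ∈ S, (1 - ε y)) * ∏ y ∈ (Y.filter fun y => ¬ p y) \ S, ε y) := by
    intro S hS
    rw [mem_powerset] at hS
    have hS' : ∀ y ∈ S, y ∈ Y ∧ ¬ p y := by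
      intro y hy; have := hS hy; simpa using this
    have hsplit : Y \ S = (Y.filter p) ∪ ((Y.filter fun y => ¬ p y) \ S) := by
      ext y
      simp only [mem_sdiff, mem_union, mem_filter]
      constructor
      · rintro ⟨hy, hys⟩
        by_cases hp : p y
        · exact Or.inl ⟨hy, hp⟩
        · exact Or.inr ⟨⟨hy, hp⟩, hys⟩
      · rintro (⟨hy, hp⟩ | ⟨⟨hy, hp⟩, hys⟩)
        · exact ⟨hy, fun hyS => (hS' y hyS).2 hp⟩
        · exact ⟨hy, hys⟩
    have hdisj : Disjoint (Y.filter p) ((Y.filter fun y => ¬ p y) \ S) := by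
      rw [Finset.disjoint_left]
      intro a ha hb
      rw [mem_filter] at ha
      rw [mem_sdiff, mem_filter] at hb
      exact hb.1.2 ha.2
    rw [hsplit, Finset.prod_union hdisj]
    ring
  rw [Finset.sum_congr rfl h2, ← Finset.mul_sum]
  have := (Finset.prod_add (fun y => (1 - ε y)) ε (Y.filter fun y => ¬ p y)).symm
  rw [this]
  simp

lemma delta_featDiv {X 𝔽 : Type*} [DecidableEq X] [DecidableEq 𝔽]
    (α : X → Finset 𝔽) (ν : 𝔽 → ℝ) (x : X) (S : Finset X) :
    (∑ f ∈ (S ∪ {x}).biUnion α, ν f) - (∑ f ∈ S.biUnion α, ν f)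
      = ∑ f ∈ α x, ν f * (if ∀ y ∈ S, f ∉ α y then 1 else 0) := by
  have h1 : (S ∪ {x}).biUnion α = S.biUnion α ∪ α x := by
    ext f; simp [Finset.mem_biUnion, or_comm]
  rw [h1]
  have h2 : S.biUnion α ∪ α x = S.biUnion α ∪ (α x \ S.biUnion α) := by
    simp [Finset.union_sdiff_self_eq_union]
  have hdisj : Disjoint (S.biUnion α) (α x \ S.biUnion α) :=
    Finset.disjoint_sdiff
  rw [h2, Finset.sum_union hdisj]
  rw [add_sub_cancel_left]
  rw [Finset.sdiff_eq_filter, Finset.sum_filter]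
  apply Finset.sum_congr rfl
  intro f hf
  by_cases hc : f ∈ S.biUnion α
  · have : ¬ ∀ y ∈ S, f ∉ α y := by
      simp only [mem_biUnion] at hc
      push_neg; obtain ⟨y, hy, hfy⟩ := hc; exact ⟨y, hy, hfy⟩
    simp [hc, this]
  · have : ∀ y ∈ S, f ∉ α y := by
      intro y hy hfy
      exact hc (Finset.mem_biUnion.mpr ⟨y, hy, hfy⟩)
    rw [if_pos hc, if_pos this, mul_one]


/-- Proposition 2 (variance): under the g-FOB model, the variance of the marginal gain
of the feature diversity function satisfies
`Φ_x = (Σ_{(f,f') ∈ α(x)×α(x)} ν(f)ν(f') Π_{y ∈ W_{x,ff'}} ε_y) − ψ_x²`, where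
`W_{x,ff'} = {w ∈ X \ {x} : f ∈ α(w) or f' ∈ α(w)}`. -/
theorem variance_featDiv {X 𝔽 : Type*} [Fintype X] [DecidableEq X] [DecidableEq 𝔽]
    (α : X → Finset 𝔽) (ν : 𝔽 → ℝ) (hν : ∀ f, 0 ≤ ν f) (ε : X → ℝ) (x : X) :
    PhiVar ε (featDiv α ν) x
      = (∑ f ∈ α x, ∑ f' ∈ α x, ν f * ν f' *
            ∏ y ∈ (Finset.univ.erase x).filter (fun w => f ∈ α w ∨ f' ∈ α w), ε y)
        - (∑ f ∈ α x, ν f *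
            ∏ y ∈ (Finset.univ.erase x).filter (fun y => f ∈ α y), ε y) ^ 2 := by
  classical
  set Y : Finset X := Finset.univ.erase x with hYdef
  have hdelta : ∀ S : Finset X, featDiv α ν (S ∪ {x}) - featDiv α ν S
      = ∑ f ∈ α x, ν f * (if ∀ y ∈ S, f ∉ α y then 1 else 0) := by
    intro S
    unfold featDiv
    rw [delta_featDiv α ν x S]
    exact Finset.sum_congr rfl fun f _ => by congr!
  have hkey : ∀ (p : X → Prop) (_ : DecidablePred p),
      ∑ S ∈ Y.powerset, gfobWeight ε x S * (if ∀ y ∈ S, ¬ p y then (1:ℝ) else 0)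
        = ∏ y ∈ Y.filter p, ε y := by
    intro p hp
    have := key_prod Y ε p
    rw [← this]
    refine Finset.sum_congr rfl fun S hS => ?_
    congr 1
    split_ifs <;> rfl
  have hpsi : psi ε (featDiv α ν) x
      = ∑ f ∈ α x, ν f * ∏ y ∈ Y.filter (fun y => f ∈ α y), ε y := by
    unfold psi
    calc ∑ S ∈ Y.powerset, gfobWeight ε x S * (featDiv α ν (S ∪ {x}) - featDiv α ν S)
        = ∑ S ∈ Y.powerset, ∑ f ∈ α x,
            ν f * (gfobWeight ε x S * (if ∀ y ∈ S, f ∉ α y then 1 else 0)) := by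
          refine Finset.sum_congr rfl fun S hS => ?_
          rw [hdelta S, Finset.mul_sum]
          exact Finset.sum_congr rfl fun f hf => by ring
      _ = ∑ f ∈ α x, ν f * ∑ S ∈ Y.powerset,
            gfobWeight ε x S * (if ∀ y ∈ S, f ∉ α y then 1 else 0) := by
          rw [Finset.sum_comm]
          exact Finset.sum_congr rfl fun f _ => (Finset.mul_sum _ _ _).symm
      _ = _ := by
          refine Finset.sum_congr rfl fun f hf => ?_
          rw [hkey (fun y => f ∈ α y) (fun y => inferInstance)]
  have hind : ∀ (S : Finset X) (f f' : 𝔽),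
      (if ∀ y ∈ S, f ∉ α y then (1:ℝ) else 0) * (if ∀ y ∈ S, f' ∉ α y then 1 else 0)
        = if ∀ y ∈ S, ¬ (f ∈ α y ∨ f' ∈ α y) then 1 else 0 := by
    intro S f f'
    by_cases h : ∀ y ∈ S, ¬ (f ∈ α y ∨ f' ∈ α y)
    · have h1 : ∀ y ∈ S, f ∉ α y := fun y hy hf => h y hy (Or.inl hf)
      have h2 : ∀ y ∈ S, f' ∉ α y := fun y hy hf => h y hy (Or.inr hf)
      rw [if_pos h, if_pos h1, if_pos h2]; norm_num
    · rw [if_neg h]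
      push_neg at h
      obtain ⟨y, hy, hfy⟩ := h
      rcases hfy with hf | hf
      · rw [if_neg (show ¬ ∀ y ∈ S, f ∉ α y by push_neg; exact ⟨y, hy, hf⟩)]; ring
      · rw [if_neg (show ¬ ∀ y ∈ S, f' ∉ α y by push_neg; exact ⟨y, hy, hf⟩), mul_zero]
  have hM : ∑ S ∈ Y.powerset, gfobWeight ε x S * (featDiv α ν (S ∪ {x}) - featDiv α ν S) ^ 2
      = ∑ f ∈ α x, ∑ f' ∈ α x, ν f * ν f' *
          ∏ y ∈ Y.filter (fun w => f ∈ α w ∨ f' ∈ α w), ε y := by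
    calc ∑ S ∈ Y.powerset, gfobWeight ε x S * (featDiv α ν (S ∪ {x}) - featDiv α ν S) ^ 2
        = ∑ S ∈ Y.powerset, ∑ f ∈ α x, ∑ f' ∈ α x,
            ν f * ν f' * (gfobWeight ε x S *
              (if ∀ y ∈ S, ¬ (f ∈ α y ∨ f' ∈ α y) then 1 else 0)) := by
          refine Finset.sum_congr rfl fun S hS => ?_
          rw [hdelta S, sq, Finset.sum_mul_sum, Finset.mul_sum]
          refine Finset.sum_congr rfl fun f hf => ?_
          rw [Finset.mul_sum]
          refine Finset.sum_congr rfl fun f' hf' => ?_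
          rw [← hind S f f']
          ring
      _ = ∑ f ∈ α x, ∑ f' ∈ α x, ν f * ν f' * ∑ S ∈ Y.powerset,
            gfobWeight ε x S * (if ∀ y ∈ S, ¬ (f ∈ α y ∨ f' ∈ α y) then 1 else 0) := by
          rw [Finset.sum_comm]
          refine Finset.sum_congr rfl fun f _ => ?_
          rw [Finset.sum_comm]
          exact Finset.sum_congr rfl fun f' _ => (Finset.mul_sum _ _ _).symm
      _ = _ := by
          refine Finset.sum_congr rfl fun f hf => Finset.sum_congr rfl fun f' hf' => ?_
          rw [hkey (fun y => f ∈ α y ∨ f' ∈ α y) (fun y => inferInstance)]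
  unfold PhiVar
  rw [hM, hpsi]
end

section
/- (HEDGE formula for feature diversity) Let X be a finite set of species, 𝔽 a finite set of features, α : X → 2^𝔽, ν : 𝔽 → ℝ≥0, and let φ be the associated feature diversity function. Under the g-FOB model with extinction probabilities ε : X → ℝ, for each species x ∈ X the generalized HEDGE score satisfies ψ'_x = Σ_{f ∈ α(x)} ν(f) · ∏_{y ∈ X : f ∈ α(y)} ε_y, where the product now ranges over all species carrying f, including x itself. -/
open Finset

/-!
When `x` survives, `Δ'` vanishes, so `ψ'_x = ε_x · ψ_x`. Adding `x` to a survivor set `S` gains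
exactly the features of `x` that no species of `S` carries, and under the g-FOB model a feature
`f` is absent from `S` with probability `∏ ε_y` over the species `y ≠ x` carrying `f`, since the
species survive independently. Hence `ψ_x` is the classical HED sum, and multiplying by `ε_x`
moves `x` into each product.
-/

theorem Finset.ite_mem_biUnion_eq_prod {ι κ M : Type*} [DecidableEq κ] [CommMonoidWithZero M]
    (s : Finset ι) (t : ι → Finset κ) (a : κ) :
    (if a ∈ s.biUnion t then (0 : M) else 1) = ∏ i ∈ s, if a ∈ t i then (0 : M) else 1 := by
  split_ifs with h
  · obtain ⟨i, hi, hai⟩ := mem_biUnion.1 h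
    rw [eq_comm]
    exact prod_eq_zero hi (if_pos hai)
  · rw [eq_comm]
    exact prod_eq_one fun i hi => if_neg fun hai => h (mem_biUnion.2 ⟨i, hi, hai⟩)

theorem Finset.sum_union_sub_sum {ι M : Type*} [DecidableEq ι] [AddCommGroup M]
    (s t : Finset ι) (f : ι → M) :
    ∑ i ∈ s ∪ t, f i - ∑ i ∈ s, f i = ∑ i ∈ t \ s, f i := by
  rw [sub_eq_iff_eq_add, ← union_sdiff_left, sum_sdiff subset_union_left]

theorem featDiv_union_singleton_sub {X 𝔽 : Type*} [DecidableEq X] [DecidableEq 𝔽]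
    (α : X → Finset 𝔽) (ν : 𝔽 → ℝ) (S : Finset X) (x : X) :
    featDiv α ν (S ∪ {x}) - featDiv α ν S
      = ∑ f ∈ α x, ν f * if f ∈ S.biUnion α then 0 else 1 := by
  rw [featDiv, featDiv, union_biUnion, singleton_biUnion, sum_union_sub_sum, sdiff_eq_filter,
    sum_filter]
  exact sum_congr rfl fun f _ => by split_ifs <;> simp

section Hedge

variable {X : Type*} [Fintype X] [DecidableEq X]

theorem psi'_eq_mul_psi (ε : X → ℝ) (φ : Finset X → ℝ) (x : X) :
    psi' ε φ x = ε x * psi ε φ x := by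
  simp only [psi', psi, sub_self, mul_zero, zero_add, union_empty, mul_sum]
  exact sum_congr rfl fun S _ => by ring

theorem sum_gfobWeight_mul_notMem_biUnion {𝔽 : Type*} [DecidableEq 𝔽]
    (ε : X → ℝ) (α : X → Finset 𝔽) (x : X) (f : 𝔽) :
    ∑ S ∈ (univ.erase x).powerset,
        gfobWeight ε x S * (if f ∈ S.biUnion α then 0 else 1)
      = ∏ y ∈ univ.erase x with f ∈ α y, ε y := by
  calc ∑ S ∈ (univ.erase x).powerset, gfobWeight ε x S * (if f ∈ S.biUnion α then 0 else 1)
      = ∑ S ∈ (univ.erase x).powerset,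
          (∏ y ∈ S, (if f ∈ α y then 0 else 1) * (1 - ε y)) * ∏ y ∈ univ.erase x \ S, ε y := by
        refine sum_congr rfl fun S _ => ?_
        rw [gfobWeight, ite_mem_biUnion_eq_prod, prod_mul_distrib]
        ring
    _ = ∏ y ∈ univ.erase x, ((if f ∈ α y then 0 else 1) * (1 - ε y) + ε y) := (prod_add _ _ _).symm
    _ = ∏ y ∈ univ.erase x with f ∈ α y, ε y := by
        rw [prod_filter]
        exact prod_congr rfl fun y _ => by split_ifs <;> ring

theorem psi_featDiv {𝔽 : Type*} [DecidableEq 𝔽] (α : X → Finset 𝔽) (ν : 𝔽 → ℝ)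
    (ε : X → ℝ) (x : X) :
    psi ε (featDiv α ν) x = ∑ f ∈ α x, ν f * ∏ y ∈ univ.erase x with f ∈ α y, ε y := by
  simp only [psi, featDiv_union_singleton_sub, mul_sum]
  rw [sum_comm]
  refine sum_congr rfl fun f _ => ?_
  rw [← sum_gfobWeight_mul_notMem_biUnion, mul_sum]
  exact sum_congr rfl fun S _ => by ring

end Hedge

theorem hedge_featDiv_general {X 𝔽 : Type*} [Fintype X] [DecidableEq X] [DecidableEq 𝔽]
    (α : X → Finset 𝔽) (ν : 𝔽 → ℝ) (ε : X → ℝ) (x : X) :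
    psi' ε (featDiv α ν) x
      = ∑ f ∈ α x, ν f * ∏ y ∈ Finset.univ.filter (fun y => f ∈ α y), ε y := by
  rw [psi'_eq_mul_psi, psi_featDiv, mul_sum]
  refine sum_congr rfl fun f hf => ?_
  rw [← mul_prod_erase _ _ (mem_filter.2 ⟨mem_univ x, hf⟩), ← filter_erase]
  ring

/-- HEDGE formula for feature diversity: under the g-FOB model,
`ψ'_x = Σ_{f ∈ α(x)} ν(f) · Π_{y ∈ X : f ∈ α(y)} ε_y`, where the product ranges over
ALL species carrying `f`, including `x` itself. -/
theorem hedge_featDiv {X 𝔽 : Type*} [Fintype X] [DecidableEq X] [DecidableEq 𝔽]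
    (α : X → Finset 𝔽) (ν : 𝔽 → ℝ) (hν : ∀ f, 0 ≤ ν f) (ε : X → ℝ) (x : X) :
    psi' ε (featDiv α ν) x
      = ∑ f ∈ α x, ν f * ∏ y ∈ Finset.univ.filter (fun y => f ∈ α y), ε y :=
  hedge_featDiv_general α ν ε x
end

section
/- There is a monotone submodular function vanishing on the empty set that is not a weighted coverage function: let X be a three-element set and define φ : 2^X → ℝ by φ(S) = |S| if |S| ≤ 2 and φ(X) = 2. Then φ is monotone, submodular, and φ(∅) = 0, but there is NO finite set of features 𝔽, assignment α : X → 2^𝔽, and weight function ν : 𝔽 → ℝ with ν(f) ≥ 0 for all f, such that φ(S) = Σ_{f ∈ ⋃_{s ∈ S} α(s)} ν(f) for all S ⊆ X. -/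
open Finset

/-!
A weighted coverage function is a nonnegative measure of a union of sets, so the Bonferroni
inequality bounds its value on `X` below by `Σ φ({i}) - Σ_{i < j} w(α i ∩ α j)`. For
`φ(S) = min(|S|, 2)` every pair satisfies `φ({i, j}) = φ({i}) + φ({j})`, which forces the
pairwise overlaps to have weight `0`; hence `φ(X) ≥ 3`, contradicting `φ(X) = 2`.
-/

/-- The function `φ(S) = min(|S|, 2)` on subsets of a three-element set. -/
noncomputable def phiMin2 (S : Finset (Fin 3)) : ℝ := ((min S.card 2 : ℕ) : ℝ)

section MinCard

variable {ι : Type*}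

lemma min_card_le_min_card {A B : Finset ι} (h : A ⊆ B) (k : ℕ) : min #A k ≤ min #B k :=
  min_le_min_right k (card_le_card h)

lemma min_card_union_add_min_card_inter_le [DecidableEq ι] (A B : Finset ι) (k : ℕ) :
    min #(A ∪ B) k + min #(A ∩ B) k ≤ min #A k + min #B k := by
  have := card_union_add_card_inter A B
  have := card_le_card (inter_subset_left : A ∩ B ⊆ A)
  have := card_le_card (inter_subset_right : A ∩ B ⊆ B)
  omega

end MinCard

lemma sum_add_sum_add_sum_le_sum_union_union {ι M : Type*} [DecidableEq ι] [AddCommMonoid M]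
    [PartialOrder M] [IsOrderedAddMonoid M] {ν : ι → M} (hν : ∀ i, 0 ≤ ν i) (A B C : Finset ι) :
    ∑ i ∈ A, ν i + ∑ i ∈ B, ν i + ∑ i ∈ C, ν i ≤
      ∑ i ∈ A ∪ B ∪ C, ν i + ∑ i ∈ A ∩ B, ν i + ∑ i ∈ A ∩ C, ν i + ∑ i ∈ B ∩ C, ν i := by
  have hAB := sum_union_inter (s₁ := A) (s₂ := B) (f := ν)
  have hABC := sum_union_inter (s₁ := A ∪ B) (s₂ := C) (f := ν)
  have hACBC := sum_union_inter (s₁ := A ∩ C) (s₂ := B ∩ C) (f := ν)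
  rw [← union_inter_distrib_right] at hACBC
  calc ∑ i ∈ A, ν i + ∑ i ∈ B, ν i + ∑ i ∈ C, ν i
      ≤ ∑ i ∈ A, ν i + ∑ i ∈ B, ν i + ∑ i ∈ C, ν i + ∑ i ∈ A ∩ C ∩ (B ∩ C), ν i :=
        le_add_of_nonneg_right (sum_nonneg fun i _ ↦ hν i)
    _ = ∑ i ∈ A ∪ B ∪ C, ν i + ∑ i ∈ A ∩ B, ν i + ∑ i ∈ A ∩ C, ν i + ∑ i ∈ B ∩ C, ν i := by
        rw [← hAB, add_right_comm _ (∑ i ∈ A ∩ B, ν i), ← hABC,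
          add_assoc (∑ i ∈ A ∪ B ∪ C, ν i + ∑ i ∈ A ∩ B, ν i), ← hACBC]
        abel

lemma phiMin2_not_weighted_coverage :
    ¬ ∃ (𝔽 : Type) (_ : Fintype 𝔽) (_ : DecidableEq 𝔽)
        (α : Fin 3 → Finset 𝔽) (ν : 𝔽 → ℝ),
        (∀ f, 0 ≤ ν f) ∧
        ∀ S : Finset (Fin 3), phiMin2 S = ∑ f ∈ S.biUnion α, ν f := by
  rintro ⟨𝔽, _, _, α, ν, hν, hφ⟩
  have single : ∀ i, ∑ f ∈ α i, ν f = 1 := fun i ↦ by simpa [phiMin2] using (hφ {i}).symm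
  have pair_inter : ∀ i j, i ≠ j → ∑ f ∈ α i ∩ α j, ν f = 0 := by
    intro i j hij
    have hpair : ∑ f ∈ α i ∪ α j, ν f = 2 := by
      simpa [phiMin2, card_pair hij, biUnion_insert] using (hφ {i, j}).symm
    linarith [sum_union_inter (s₁ := α i) (s₂ := α j) (f := ν), single i, single j]
  have total : ∑ f ∈ α 0 ∪ α 1 ∪ α 2, ν f = 2 := by
    simpa [phiMin2, biUnion_insert, union_assoc] using (hφ {0, 1, 2}).symm
  have := sum_add_sum_add_sum_le_sum_union_union hν (α 0) (α 1) (α 2)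
  rw [single, single, single, total, pair_inter 0 1 (by decide), pair_inter 0 2 (by decide),
    pair_inter 1 2 (by decide)] at this
  norm_num at this

/-- `φ(S) = min(|S|, 2)` on a three-element set is monotone, submodular and vanishes on
`∅`, yet it is NOT a weighted coverage function: there is no finite feature set `𝔽`,
assignment `α` and nonnegative weighting `ν` with `φ(S) = Σ_{f ∈ ⋃_{s ∈ S} α(s)} ν(f)`. -/
theorem monotone_submodular_not_weighted_coverage :
    (∀ A B : Finset (Fin 3), A ⊆ B → phiMin2 A ≤ phiMin2 B) ∧
    (∀ A B : Finset (Fin 3),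
      phiMin2 (A ∪ B) + phiMin2 (A ∩ B) ≤ phiMin2 A + phiMin2 B) ∧
    phiMin2 ∅ = 0 ∧
    ¬ ∃ (𝔽 : Type) (_ : Fintype 𝔽) (_ : DecidableEq 𝔽)
        (α : Fin 3 → Finset 𝔽) (ν : 𝔽 → ℝ),
        (∀ f, 0 ≤ ν f) ∧
        ∀ S : Finset (Fin 3), phiMin2 S = ∑ f ∈ S.biUnion α, ν f := by
  refine ⟨fun A B h ↦ ?_, fun A B ↦ ?_, by simp [phiMin2], phiMin2_not_weighted_coverage⟩
  · exact Nat.mono_cast (min_card_le_min_card h 2)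
  · unfold phiMin2
    exact_mod_cast min_card_union_add_min_card_inter_le A B 2
end

section
/- (ψ̄_x as a Shapley value) Let X be a finite set of species, 𝔽 a finite set of features, α : X → 2^𝔽 and ν : 𝔽 → ℝ≥0, and for f ∈ 𝔽 let N(f) denote the number of species in X carrying feature f. Fix x ∈ X. Under the simple field-of-bullets model with common extinction probability ε, the HED score of x is ψ_x(ε) = Σ_{f ∈ α(x)} ν(f) · ε^{N(f)−1}; averaging over ε uniformly distributed on [0,1] gives ψ̄_x = ∫_0^1 ψ_x(ε) dε = Σ_{f ∈ α(x)} ν(f) / N(f). -/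
open Finset

theorem integral_zero_one_pow_pred {n : ℕ} (hn : 0 < n) :
    ∫ e in (0:ℝ)..1, e ^ (n - 1) = 1 / n := by
  rw [integral_pow, Nat.sub_add_cancel hn, one_pow, zero_pow hn.ne', Nat.cast_sub hn]
  simp

theorem card_filter_mem_pos {X 𝔽 : Type*} [Fintype X] [DecidableEq 𝔽]
    (α : X → Finset 𝔽) {x : X} {f : 𝔽} (hf : f ∈ α x) :
    0 < (univ.filter (fun y => f ∈ α y)).card :=
  card_pos.mpr ⟨x, by simpa using hf⟩

theorem mean_hed_eq_shapley_general {X 𝔽 : Type*} [Fintype X] [DecidableEq 𝔽]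
    (α : X → Finset 𝔽) (ν : 𝔽 → ℝ) (x : X) :
    (∫ e in (0:ℝ)..1, ∑ f ∈ α x,
        ν f * e ^ ((Finset.univ.filter (fun y => f ∈ α y)).card - 1))
      = ∑ f ∈ α x, ν f / ((Finset.univ.filter (fun y => f ∈ α y)).card : ℝ) := by
  rw [intervalIntegral.integral_finsetSum fun f _ =>
    ((continuous_pow _).const_mul (ν f)).intervalIntegrable 0 1]
  refine sum_congr rfl fun f hf => ?_
  rw [intervalIntegral.integral_const_mul,
    integral_zero_one_pow_pred (card_filter_mem_pos α hf), mul_one_div]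

/-- `ψ̄_x` as a Shapley value: under the simple field-of-bullets model with common
extinction probability `ε`, the HED score is `ψ_x(ε) = Σ_{f ∈ α(x)} ν(f) · ε^(N(f)−1)`
(where `N(f)` is the number of species carrying `f`), and averaging over `ε` uniform
on `[0,1]` gives `ψ̄_x = ∫_0^1 ψ_x(ε) dε = Σ_{f ∈ α(x)} ν(f)/N(f)`. -/
theorem mean_hed_eq_shapley {X 𝔽 : Type*} [Fintype X] [DecidableEq X] [DecidableEq 𝔽]
    (α : X → Finset 𝔽) (ν : 𝔽 → ℝ) (hν : ∀ f, 0 ≤ ν f) (x : X) :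
    (∫ e in (0:ℝ)..1, ∑ f ∈ α x,
        ν f * e ^ ((Finset.univ.filter (fun y => f ∈ α y)).card - 1))
      = ∑ f ∈ α x, ν f / ((Finset.univ.filter (fun y => f ∈ α y)).card : ℝ) :=
  mean_hed_eq_shapley_general α ν x
end

section
/- (Average Shapley value proposition) Let X be a finite set of n species, 𝔽 a finite set of features with every feature carried by at least one species, α : X → 2^𝔽, and ν : 𝔽 → ℝ≥0. For f ∈ 𝔽 let N(f) be the number of species carrying f, and for x ∈ X let ψ̄_x = Σ_{f ∈ α(x)} ν(f)/N(f). Then the average of ψ̄_x over all species equals the total feature diversity divided by n: (1/n) · Σ_{x ∈ X} ψ̄_x = (1/n) · Σ_{f ∈ 𝔽} ν(f). In particular this average is independent of how the features are distributed across the species. -/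
open Finset

theorem sum_sum_mem_eq_sum_card_filter_nsmul {X F M : Type*} [Fintype X] [Fintype F]
    [DecidableEq F] [AddCommMonoid M] (α : X → Finset F) (g : F → M) :
    ∑ x, ∑ f ∈ α x, g f = ∑ f, #{x | f ∈ α x} • g f := by
  rw [sum_comm' (t' := univ) (s' := fun f => {x | f ∈ α x}) (by simp)]
  simp only [sum_const]

theorem avg_shapley_value_general {X 𝔽 : Type*} [Fintype X]
    [Fintype 𝔽] [DecidableEq 𝔽]
    (α : X → Finset 𝔽) (ν : 𝔽 → ℝ)
    (hN : ∀ f : 𝔽, 1 ≤ (Finset.univ.filter (fun x => f ∈ α x)).card) :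
    (1 / (Fintype.card X : ℝ)) *
        ∑ x : X, ∑ f ∈ α x, ν f / ((Finset.univ.filter (fun y => f ∈ α y)).card : ℝ)
      = (1 / (Fintype.card X : ℝ)) * ∑ f : 𝔽, ν f := by
  rw [sum_sum_mem_eq_sum_card_filter_nsmul]
  congr 1
  refine sum_congr rfl fun f _ => ?_
  have hcard : (#{x | f ∈ α x} : ℝ) ≠ 0 := by exact_mod_cast Nat.one_le_iff_ne_zero.mp (hN f)
  rw [nsmul_eq_mul, mul_div_cancel₀ _ hcard]

/-- Average Shapley value proposition: if every feature is carried by at least one of the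
`n ≥ 1` species, then the average over all species of `ψ̄_x = Σ_{f ∈ α(x)} ν(f)/N(f)`
equals `(1/n) · Σ_f ν(f)`, independently of how features are distributed. -/
theorem avg_shapley_value {X 𝔽 : Type*} [Fintype X] [DecidableEq X]
    [Fintype 𝔽] [DecidableEq 𝔽]
    (α : X → Finset 𝔽) (ν : 𝔽 → ℝ) (hν : ∀ f, 0 ≤ ν f)
    (hn : 1 ≤ Fintype.card X)
    (hN : ∀ f : 𝔽, 1 ≤ (Finset.univ.filter (fun x => f ∈ α x)).card) :
    (1 / (Fintype.card X : ℝ)) *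
        ∑ x : X, ∑ f ∈ α x, ν f / ((Finset.univ.filter (fun y => f ∈ α y)).card : ℝ)
      = (1 / (Fintype.card X : ℝ)) * ∑ f : 𝔽, ν f :=
  avg_shapley_value_general α ν hN
end

section
/- (Standard deviation lower bound for HEDGE) Let X be a finite set of species, ε : X → ℝ with 0 ≤ ε_y ≤ 1 for all y, x ∈ X with ε_x > 0, and φ : 2^X → ℝ arbitrary. Then Φ'_x ≥ ψ'_x² · (1 − ε_x)/ε_x; in particular, if ε_x < 1/2 then the standard deviation √(Φ'_x) of Δ'_φ(S_x, x) is strictly larger than its mean ψ'_x whenever ψ'_x ≠ 0. -/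
open Finset

/-- Standard deviation lower bound for HEDGE: if `0 ≤ ε_y ≤ 1` for all `y` and
`ε_x > 0`, then `Φ'_x ≥ ψ'_x² · (1 − ε_x)/ε_x`; in particular, if `ε_x < 1/2` then the
standard deviation `√Φ'_x` strictly exceeds the mean `ψ'_x` whenever `ψ'_x ≠ 0`. -/
theorem hedge_sd_ge_mean {X : Type*} [Fintype X] [DecidableEq X]
    (ε : X → ℝ) (hε : ∀ y, 0 ≤ ε y ∧ ε y ≤ 1) (x : X) (hx : 0 < ε x)
    (φ : Finset X → ℝ) :
    psi' ε φ x ^ 2 * (1 - ε x) / ε x ≤ PhiVar' ε φ x ∧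
    (ε x < 1 / 2 → psi' ε φ x ≠ 0 → psi' ε φ x < Real.sqrt (PhiVar' ε φ x)) := by
  classical
  set P := (Finset.univ.erase x).powerset with hP
  set d : Finset X → ℝ := fun S => φ (S ∪ {x}) - φ (S ∪ ∅) with hd
  have hw0 : ∀ S ∈ P, 0 ≤ gfobWeight ε x S := by
    intro S _
    apply mul_nonneg <;> apply Finset.prod_nonneg <;> intro y _
    · linarith [(hε y).2]
    · exact (hε y).1
  have hwsum : ∑ S ∈ P, gfobWeight ε x S = 1 := by
    simp only [gfobWeight, hP]
    rw [← Finset.prod_add]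
    simp
  have hpsi : psi' ε φ x = ε x * ∑ S ∈ P, gfobWeight ε x S * d S := by
    rw [psi', Finset.mul_sum]
    exact Finset.sum_congr rfl fun S _ => by simp only [hd, sub_self]; ring
  have hvar : PhiVar' ε φ x =
      ε x * (∑ S ∈ P, gfobWeight ε x S * d S ^ 2) - psi' ε φ x ^ 2 := by
    rw [PhiVar', Finset.mul_sum]
    congr 1
    exact Finset.sum_congr rfl fun S _ => by simp only [hd, sub_self]; ring
  set T := ∑ S ∈ P, gfobWeight ε x S * d S with hT
  set Q := ∑ S ∈ P, gfobWeight ε x S * d S ^ 2 with hQ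
  have key : T ^ 2 ≤ Q := by
    have hcs := Finset.sum_mul_sq_le_sq_mul_sq P
      (fun S => Real.sqrt (gfobWeight ε x S))
      (fun S => Real.sqrt (gfobWeight ε x S) * d S)
    have e1 : ∑ S ∈ P, Real.sqrt (gfobWeight ε x S) *
        (Real.sqrt (gfobWeight ε x S) * d S) = T := by
      refine Finset.sum_congr rfl fun S hS => ?_
      rw [← mul_assoc, Real.mul_self_sqrt (hw0 S hS)]
    have e2 : ∑ S ∈ P, Real.sqrt (gfobWeight ε x S) ^ 2 = 1 := by
      rw [← hwsum]
      exact Finset.sum_congr rfl fun S hS => Real.sq_sqrt (hw0 S hS)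
    have e3 : ∑ S ∈ P, (Real.sqrt (gfobWeight ε x S) * d S) ^ 2 = Q := by
      refine Finset.sum_congr rfl fun S hS => ?_
      rw [mul_pow, Real.sq_sqrt (hw0 S hS)]
    rw [e1, e2, e3, one_mul] at hcs
    exact hcs
  have goal1 : psi' ε φ x ^ 2 * (1 - ε x) / ε x ≤ PhiVar' ε φ x := by
    rw [div_le_iff₀ hx, hvar, hpsi]
    nlinarith [mul_le_mul_of_nonneg_left key (le_of_lt (mul_pos hx hx))]
  refine ⟨goal1, fun h2 hne => ?_⟩
  have h1 : psi' ε φ x ^ 2 < PhiVar' ε φ x := by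
    have hd1 : (1 : ℝ) < (1 - ε x) / ε x := (one_lt_div hx).2 (by linarith)
    have hp : 0 < psi' ε φ x ^ 2 := by positivity
    calc psi' ε φ x ^ 2 < psi' ε φ x ^ 2 * ((1 - ε x) / ε x) := by nlinarith
      _ = psi' ε φ x ^ 2 * (1 - ε x) / ε x := by ring
      _ ≤ PhiVar' ε φ x := goal1
  calc psi' ε φ x ≤ |psi' ε φ x| := le_abs_self _
    _ = Real.sqrt (psi' ε φ x ^ 2) := (Real.sqrt_sq_eq_abs _).symm
    _ < Real.sqrt (PhiVar' ε φ x) := Real.sqrt_lt_sqrt (sq_nonneg _) h1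
end
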